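/- arXiv:math/0703893 — 2 statements merged into one kernel-verified Lean document; each statement's English description precedes it below -/
import Mathlib

section
/- Let λ_1,…,λ_l be distinct complex numbers with λ_a − λ_b ∉ 2πi·ℤ for all a ≠ b, and let k_1,…,k_l be positive integers. Then the V-valued functions u ↦ e^{λ_j u} u^a v_b (1 ≤ j ≤ l, 0 ≤ a ≤ k_j − 1, 1 ≤ b ≤ d) are linearly independent over the field of one-periodic meromorphic functions on ℂ: if c_{j,a,b} are one-periodic meromorphic functions on ℂ such that Σ_{j,a,b} c_{j,a,b}(u) e^{λ_j u} u^a v_b = 0 for all u outside the poles of the c_{j,a,b}, then every c_{j,a,b} is identically zero. -/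
/-!
At the points `z + n`, `n ∈ ℕ`, the periodic coefficients take the constant values `c (z)`, so
for each basis vector the relation says that the sequences `n ↦ e^{λ_j n} P_j(n)`, with `P_j`
polynomials, sum to zero. Such a sequence lies in the generalized eigenspace of the shift
operator for the eigenvalue `e^{λ_j}`, since forward differences kill polynomials of low degree.
The condition `λ_a − λ_b ∉ 2πi·ℤ` makes these eigenvalues distinct, so the generalized
eigenspaces are independent and every `P_j` vanishes. Thus the coefficients vanish wherever they
are all analytic, i.e. outside a discrete set, and hence everywhere by continuity.
-/

noncomputable section

/-- `g` is meromorphic at the point `x`. -/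
def MeromAt (g : ℂ → ℂ) (x : ℂ) : Prop :=
  ∃ k : ℕ, AnalyticAt ℂ (fun z => (z - x) ^ k * g z) x

open Polynomial Module.End Function Filter Topology

theorem fwdDiff_iter_comp_addMonoidHom {M M' G : Type*} [AddCommMonoid M] [AddCommMonoid M']
    [AddCommGroup G] (φ : M →+ M') (h : M) (f : M' → G) (m : ℕ) :
    (fwdDiff h)^[m] (f ∘ φ) = ((fwdDiff (φ h))^[m] f) ∘ φ := by
  have : Semiconj (fun f : M' → G => f ∘ φ) (fwdDiff (φ h)) (fwdDiff h) :=
    fun f => by funext n; simp [fwdDiff]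
  exact (this.iterate_right m f).symm

section ExponentialPolynomial

variable {R : Type*} [CommRing R]

variable (R) in
def seqShift : Module.End R (ℕ → R) := LinearMap.funLeft R R (· + 1)

@[simp]
theorem seqShift_apply (f : ℕ → R) (n : ℕ) : seqShift R f n = f (n + 1) := rfl

theorem seqShift_sub_smul_pow_apply (μ : R) (g : ℕ → R) (m : ℕ) :
    ((seqShift R - μ • 1) ^ m) (fun n => μ ^ n * g n) =
      fun n => μ ^ (n + m) * (fwdDiff 1)^[m] g n := by
  induction m with
  | zero => simp
  | succ m ih =>
    rw [pow_succ', Module.End.mul_apply, ih]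
    funext n
    simp only [LinearMap.sub_apply, seqShift_apply, LinearMap.smul_apply, Module.End.one_apply,
      Pi.sub_apply, Pi.smul_apply, smul_eq_mul, iterate_succ_apply', fwdDiff]
    ring

theorem pow_mul_eval_mem_maxGenEigenspace_seqShift (μ : R) (p : R[X]) :
    (fun n : ℕ => μ ^ n * p.eval (n : R)) ∈ (seqShift R).maxGenEigenspace μ := by
  rw [mem_maxGenEigenspace]
  refine ⟨p.natDegree + 1, ?_⟩
  have hdiff : (fwdDiff 1)^[p.natDegree + 1] (p.eval ∘ (Nat.cast : ℕ → R)) = 0 := by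
    simpa only [Nat.coe_castAddMonoidHom, Nat.cast_one, Pi.zero_comp,
      fwdDiff_iter_eq_zero_of_degree_lt (Nat.lt_succ_self _)] using
      fwdDiff_iter_comp_addMonoidHom (Nat.castAddMonoidHom R) 1 p.eval (p.natDegree + 1)
  refine (seqShift_sub_smul_pow_apply μ (p.eval ∘ Nat.cast) _).trans ?_
  simp [hdiff, Pi.zero_def]

theorem eq_zero_of_forall_sum_pow_mul_eval_eq_zero [IsDomain R] [CharZero R]
    {ι : Type*} [Fintype ι] {μ : ι → R} (hμ : Injective μ) (hμ0 : ∀ j, μ j ≠ 0) {p : ι → R[X]}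
    (h : ∀ n : ℕ, ∑ j, μ j ^ n * (p j).eval (n : R) = 0) (j : ι) : p j = 0 := by
  have hseq : (fun n : ℕ => μ j ^ n * (p j).eval (n : R)) = 0 :=
    (iSupIndep_iff_finsetSum_eq_zero_imp_eq_zero _).1
      ((seqShift R).independent_maxGenEigenspace.comp hμ) Finset.univ
      (fun j n => μ j ^ n * (p j).eval (n : R))
      (fun j _ => pow_mul_eval_mem_maxGenEigenspace_seqShift (μ j) (p j))
      (_root_.funext fun n => by simpa using h n) j (Finset.mem_univ j)
  refine eq_zero_of_infinite_isRoot _ (Set.infinite_of_injective_forall_mem Nat.cast_injective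
    fun n => ?_)
  simpa [hμ0 j] using congrFun hseq n

theorem eq_zero_of_sum_C_mul_X_add_C_pow_eq_zero {k : ℕ} {f : Fin k → R} {z : R}
    (h : ∑ a : Fin k, C (f a) * (X + C z) ^ (a : ℕ) = 0) (a : Fin k) : f a = 0 := by
  have h' : (∑ a : Fin k, C (f a) * X ^ (a : ℕ)).comp (X + C z) = 0 := by
    simpa [sum_comp] using h
  simpa [Fin.val_inj] using congrArg (coeff · a) (comp_X_add_C_eq_zero_iff.1 h')

end ExponentialPolynomial

theorem Function.Periodic.analyticAt_add {𝕜 E : Type*} [NontriviallyNormedField 𝕜]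
    [NormedAddCommGroup E] [NormedSpace 𝕜 E] {g : 𝕜 → E} {p x : 𝕜} (hg : Periodic g p)
    (hx : AnalyticAt 𝕜 g x) : AnalyticAt 𝕜 g (x + p) := by
  have : g = g ∘ (· - p) := funext fun w => by simpa using hg (w - p)
  rw [this]
  exact hx.comp_of_eq (by fun_prop) (by ring)

theorem AnalyticAt.eq_zero_of_eventually_punctured {𝕜 E : Type*} [NontriviallyNormedField 𝕜]
    [NormedAddCommGroup E] [NormedSpace 𝕜 E] {g : 𝕜 → E} {x : 𝕜} (hx : AnalyticAt 𝕜 g x)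
    (h : ∀ᶠ w in 𝓝[≠] x, g w = 0) : g x = 0 :=
  tendsto_nhds_unique (hx.continuousAt.tendsto.mono_left nhdsWithin_le_nhds)
    (tendsto_const_nhds.congr' (h.mono fun _ hw => hw.symm))

open Complex in
theorem coeff_eq_zero_of_sum_exp_mul_pow_eq_zero {ι : Type*} [Fintype ι] {lam : ι → ℂ}
    (hlam : Injective fun j => exp (lam j)) {k : ι → ℕ} {e : (j : ι) → Fin (k j) → ℂ} (z : ℂ)
    (h : ∀ n : ℕ, ∑ j, ∑ a : Fin (k j), e j a * (exp (lam j * (z + n)) * (z + n) ^ (a : ℕ)) = 0)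
    (j : ι) (a : Fin (k j)) : e j a = 0 := by
  set p : ι → ℂ[X] := fun j => ∑ a : Fin (k j), C (e j a * exp (lam j * z)) * (X + C z) ^ (a : ℕ)
  have hp : ∀ j, p j = 0 := by
    refine eq_zero_of_forall_sum_pow_mul_eval_eq_zero hlam (fun j => exp_ne_zero _) fun n => ?_
    rw [← h n]
    refine Finset.sum_congr rfl fun j _ => ?_
    simp only [p, eval_finsetSum, Finset.mul_sum, eval_mul, eval_C, eval_pow, eval_add, eval_X]
    refine Finset.sum_congr rfl fun a _ => ?_
    rw [mul_add, exp_add, mul_comm (lam j) n, exp_nat_mul]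
    ring
  simpa using eq_zero_of_sum_C_mul_X_add_C_pow_eq_zero (hp j) a

open Complex in
theorem coeff_eq_zero_of_sum_exp_mul_pow_smul_basis_eq_zero {V : Type*} [AddCommGroup V]
    [Module ℂ V] {ι κ : Type*} [Fintype ι] [Fintype κ] (B : Module.Basis κ ℂ V)
    {lam : ι → ℂ} (hlam : Injective fun j => exp (lam j)) {k : ι → ℕ}
    {e : ((j : ι) × Fin (k j) × κ) → ℂ} (z : ℂ)
    (h : ∀ n : ℕ, ∑ i : (j : ι) × Fin (k j) × κ,
      e i • ((exp (lam i.1 * (z + n)) * (z + n) ^ (i.2.1 : ℕ)) • B i.2.2) = 0)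
    (i : (j : ι) × Fin (k j) × κ) : e i = 0 := by
  classical
  obtain ⟨j, a, b⟩ := i
  refine coeff_eq_zero_of_sum_exp_mul_pow_eq_zero hlam (e := fun j a => e ⟨j, a, b⟩) z
    (fun n => ?_) j a
  simpa [Fintype.sum_sigma, Fintype.sum_prod_type, Finsupp.single_apply] using
    congrArg (B.coord b) (h n)

theorem statement_5_general
    (V : Type*) [AddCommGroup V] [Module ℂ V]
    (d : ℕ) (B : Module.Basis (Fin d) ℂ V)
    (l : ℕ) (lam : Fin l → ℂ) (k : Fin l → ℕ)
    (hdist : ∀ a b : Fin l, a ≠ b →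
      ∀ t : ℤ, lam a - lam b ≠ 2 * Real.pi * Complex.I * t)
    (c : ((j : Fin l) × Fin (k j) × Fin d) → ℂ → ℂ)
    (hmer : ∀ i x, MeromAt (c i) x)
    (hper : ∀ i x, c i (x + 1) = c i x)
    (hzero : ∀ x : ℂ, (∀ i, AnalyticAt ℂ (c i) x) →
      ∑ i : (j : Fin l) × Fin (k j) × Fin d,
        c i x • ((Complex.exp (lam i.1 * x) * x ^ (i.2.1 : ℕ)) • B i.2.2) = 0) :
    ∀ i x, AnalyticAt ℂ (c i) x → c i x = 0 := by
  have hlam : Injective fun j => Complex.exp (lam j) := fun a b hab => by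
    by_contra hne
    obtain ⟨t, ht⟩ := Complex.exp_eq_exp_iff_exists_int.1 hab
    exact hdist a b hne t (by rw [ht]; ring)
  have hvanish : ∀ z, (∀ i, AnalyticAt ℂ (c i) z) → ∀ i, c i z = 0 := by
    intro z hz
    refine coeff_eq_zero_of_sum_exp_mul_pow_smul_basis_eq_zero B hlam z fun n => ?_
    have hshift : ∀ i, c i (z + n) = c i z := fun i => by
      simpa using (Periodic.nat_mul (hper i) n) z
    simpa only [hshift] using hzero (z + n) fun i => by
      simpa using ((Periodic.nat_mul (hper i) n).analyticAt_add (hz i))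
  intro i x hx
  refine hx.eq_zero_of_eventually_punctured ?_
  -- `MeromAt` is Mathlib's `MeromorphicAt` unfolded
  filter_upwards [eventually_all.2 fun i' => MeromorphicAt.eventually_analyticAt (hmer i' x)]
    with w hw
  exact hvanish w hw i

/-- Let `λ_1, …, λ_l` be distinct complex numbers with
`λ_a − λ_b ∉ 2πi·ℤ` for `a ≠ b`, and `k_1, …, k_l` positive integers.  Then the `V`-valued
functions `u ↦ e^{λ_j u} u^a v_b` (`1 ≤ j ≤ l`, `0 ≤ a ≤ k_j − 1`, `1 ≤ b ≤ d`) are linearly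
independent over the field of one-periodic meromorphic functions on `ℂ`. -/
theorem statement_5
    (V : Type*) [AddCommGroup V] [Module ℂ V] [FiniteDimensional ℂ V]
    (d : ℕ) (B : Module.Basis (Fin d) ℂ V)
    (l : ℕ) (lam : Fin l → ℂ) (k : Fin l → ℕ) (hk : ∀ j, 0 < k j)
    (hdist : ∀ a b : Fin l, a ≠ b →
      ∀ t : ℤ, lam a - lam b ≠ 2 * Real.pi * Complex.I * t)
    (c : ((j : Fin l) × Fin (k j) × Fin d) → ℂ → ℂ)
    (hmer : ∀ i x, MeromAt (c i) x)
    (hper : ∀ i x, c i (x + 1) = c i x)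
    (hzero : ∀ x : ℂ, (∀ i, AnalyticAt ℂ (c i) x) →
      ∑ i : (j : Fin l) × Fin (k j) × Fin d,
        c i x • ((Complex.exp (lam i.1 * x) * x ^ (i.2.1 : ℕ)) • B i.2.2) = 0) :
    ∀ i x, AnalyticAt ℂ (c i) x → c i x = 0 :=
  statement_5_general V d B l lam k hdist c hmer hper hzero
end
end

section
/- Assume the difference operator D is admissible at infinity. If a nonzero V-valued quasi-exponential of the form Q^u (u^m v_m + u^{m−1} v_{m−1} + … + v_0), with Q a nonzero complex number and v_0,…,v_m ∈ V, lies in the kernel of D, then Q is a root of the characteristic equation of D, i.e. det(A_{N,0} + Q·A_{N−1,0} + … + Q^{N−1}·A_{1,0} + Q^N) = 0. -/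
noncomputable section

/-- If a nonzero `V`-valued quasi-exponential
`Q^u (u^m v_m + … + v_0)` lies in the kernel of the difference operator
`D = ∑_{k=0}^N A_k(u) τ^{−k}` (with `A_0 = 1`, rational coefficients with limits `L k` at
infinity, admissible at infinity: `det (L N) ≠ 0`), then `Q` is a root of the characteristic
equation `det (A_{N,0} + Q A_{N−1,0} + … + Q^{N−1} A_{1,0} + Q^N) = 0`. -/
theorem statement_6
    (V : Type*) [NormedAddCommGroup V] [NormedSpace ℂ V] [FiniteDimensional ℂ V]
    (N : ℕ) (hN : 1 ≤ N)
    (A : ℕ → ℂ → Module.End ℂ V)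
    (hA0 : ∀ u, A 0 u = LinearMap.id)
    (hrat : ∀ k ≤ N, ∃ (P : Polynomial (Module.End ℂ V)) (q : Polynomial ℂ), q ≠ 0 ∧
      ∀ u : ℂ, q.eval u ≠ 0 → A k u = (q.eval u)⁻¹ • P.eval (u • (1 : Module.End ℂ V)))
    (L : ℕ → Module.End ℂ V)
    (hL0 : L 0 = LinearMap.id)
    (hlim : ∀ k ≤ N, ∀ w : V,
      Filter.Tendsto (fun u => A k u w) (Bornology.cobounded ℂ) (nhds (L k w)))
    (hadm : LinearMap.det (L N) ≠ 0)
    (Q : ℂ) (hQ : Q ≠ 0) (q : ℂ) (hq : Complex.exp q = Q)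
    (m : ℕ) (v : ℕ → V) (hv : ∃ j ≤ m, v j ≠ 0)
    (S : Finset ℂ)
    (hker : ∀ u : ℂ, u ∉ S →
      ∑ k ∈ Finset.range (N + 1),
        A k u (Complex.exp (q * (u - (k : ℂ))) •
          ∑ j ∈ Finset.range (m + 1), ((u - (k : ℂ)) ^ j) • v j) = 0) :
    LinearMap.det (∑ k ∈ Finset.range (N + 1), Q ^ (N - k) • L k) = 0 := by
  classical
  obtain ⟨j₀, hj₀m, hj₀⟩ := hv
  set r := Nat.findGreatest (fun j => v j ≠ 0) m with hr
  have hrm : r ≤ m := Nat.findGreatest_le m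
  have hvr : v r ≠ 0 := Nat.findGreatest_spec (P := fun j => v j ≠ 0) hj₀m hj₀
  set B : Module.End ℂ V := ∑ k ∈ Finset.range (N + 1), Q ^ (N - k) • L k with hB
  -- the rescaled function
  set F : ℂ → V := fun u => ∑ k ∈ Finset.range (N + 1), ∑ j ∈ Finset.range (r + 1),
    (Q ^ (N - k) * ((1 : ℂ) - (k : ℂ) * u⁻¹) ^ j * (u⁻¹) ^ (r - j)) • A k u (v j) with hF
  -- F is eventually 0
  have hEv : ∀ᶠ u in Bornology.cobounded ℂ, F u = 0 := by
    have hfin : ((S : Set ℂ) ∪ {0}).Finite := S.finite_toSet.union (Set.finite_singleton 0)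
    have hmem : ((S : Set ℂ) ∪ {0})ᶜ ∈ Bornology.cobounded ℂ :=
      Bornology.isBounded_def.mp hfin.isBounded
    filter_upwards [hmem] with u hu
    simp only [Set.mem_compl_iff, Set.mem_union, Set.mem_singleton_iff, not_or,
      Finset.mem_coe] at hu
    obtain ⟨huS, hu0⟩ := hu
    have h0 := hker u huS
    have hc : F u = (Q ^ N * Complex.exp (-(q * u)) * (u⁻¹) ^ r) •
        ∑ k ∈ Finset.range (N + 1),
          A k u (Complex.exp (q * (u - (k : ℂ))) •
            ∑ j ∈ Finset.range (m + 1), ((u - (k : ℂ)) ^ j) • v j) := by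
      rw [hF, Finset.smul_sum]
      refine Finset.sum_congr rfl fun k hk => ?_
      have hkN : k ≤ N := Nat.lt_succ_iff.mp (Finset.mem_range.mp hk)
      rw [map_smul, map_sum]
      simp only [map_smul, Finset.smul_sum, smul_smul]
      rw [← Finset.sum_subset (Finset.range_subset_range.2 (Nat.succ_le_succ hrm))
        (fun j hj hj' => ?_)]
      · refine Finset.sum_congr rfl fun j hj => ?_
        have hjr : j ≤ r := Nat.lt_succ_iff.mp (Finset.mem_range.mp hj)
        congr 1
        have he : Complex.exp (q * (u - (k : ℂ))) = Complex.exp (q * u) / Q ^ k := by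
          rw [mul_sub, Complex.exp_sub]
          congr 1
          rw [mul_comm, Complex.exp_nat_mul, hq]
        rw [pow_sub₀ Q hQ hkN, pow_sub₀ _ (inv_ne_zero hu0) hjr, he, Complex.exp_neg]
        have h1 : (1 : ℂ) - (k : ℂ) * u⁻¹ = (u - (k : ℂ)) * u⁻¹ := by field_simp
        rw [h1, mul_pow]
        have hQk : Q ^ k ≠ 0 := pow_ne_zero _ hQ
        have hEu : Complex.exp (q * u) ≠ 0 := Complex.exp_ne_zero _
        field_simp
      · have hrj : r < j := by
          by_contra h
          exact hj' (Finset.mem_range.mpr (Nat.lt_succ_iff.mpr (le_of_not_gt h)))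
        have hjm : j ≤ m := Nat.lt_succ_iff.mp (Finset.mem_range.mp hj)
        have hz : v j = 0 := not_not.mp (Nat.findGreatest_is_greatest (P := fun j => v j ≠ 0) hrj hjm)
        simp [hz]
    rw [hc, h0, smul_zero]
  -- F tends to B (v r)
  have hlimF : Filter.Tendsto F (Bornology.cobounded ℂ)
      (nhds (∑ k ∈ Finset.range (N + 1), ∑ j ∈ Finset.range (r + 1),
        (Q ^ (N - k) * ((1 : ℂ) - (k : ℂ) * 0) ^ j * (0 : ℂ) ^ (r - j)) • L k (v j))) := by
    refine tendsto_finset_sum _ fun k hk => tendsto_finset_sum _ fun j hj => ?_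
    have hkN : k ≤ N := Nat.lt_succ_iff.mp (Finset.mem_range.mp hk)
    have hsc : Filter.Tendsto (fun u : ℂ => Q ^ (N - k) * ((1 : ℂ) - (k : ℂ) * u⁻¹) ^ j *
        (u⁻¹) ^ (r - j)) (Bornology.cobounded ℂ)
        (nhds (Q ^ (N - k) * ((1 : ℂ) - (k : ℂ) * 0) ^ j * (0 : ℂ) ^ (r - j))) := by
      have hcont : Continuous fun t : ℂ => Q ^ (N - k) * ((1 : ℂ) - (k : ℂ) * t) ^ j *
          t ^ (r - j) := by fun_prop
      exact (hcont.tendsto 0).comp Filter.tendsto_inv₀_cobounded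
    exact hsc.smul (hlim k hkN (v j))
  -- identify the limit
  have hT : (∑ k ∈ Finset.range (N + 1), ∑ j ∈ Finset.range (r + 1),
      (Q ^ (N - k) * ((1 : ℂ) - (k : ℂ) * 0) ^ j * (0 : ℂ) ^ (r - j)) • L k (v j)) = B (v r) := by
    rw [hB, LinearMap.sum_apply]
    refine Finset.sum_congr rfl fun k _ => ?_
    rw [Finset.sum_eq_single r]
    · simp
    · intro j hj hjr
      have hjlt : j < r := lt_of_le_of_ne (Nat.lt_succ_iff.mp (Finset.mem_range.mp hj)) hjr
      simp [zero_pow (Nat.sub_ne_zero_of_lt hjlt)]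
    · intro h
      exact absurd (Finset.self_mem_range_succ r) h
  have hzero : Filter.Tendsto F (Bornology.cobounded ℂ) (nhds 0) :=
    Filter.Tendsto.congr' (hEv.mono fun x hx => hx.symm) tendsto_const_nhds
  have hBvr : B (v r) = 0 := by
    rw [← hT]
    exact tendsto_nhds_unique hlimF hzero
  -- conclude
  by_contra hdet
  have hinj : Function.Injective B := by
    have hc : ((LinearMap.equivOfDetNeZero B hdet : V ≃ₗ[ℂ] V) : V →ₗ[ℂ] V) = B :=
      LinearEquiv.coe_ofIsUnitDet _
    have := (LinearMap.equivOfDetNeZero B hdet).injective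
    rwa [← LinearEquiv.coe_coe, hc] at this
  exact hvr (hinj (by rw [hBvr, map_zero]))
end
end
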